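/- arXiv:0803.2540 — 4 statements merged into one kernel-verified Lean document; each statement's English description precedes it below -/
import Mathlib

section
/- Let F, F₁, F₂ be additive functors from the category of R-modules to the category of S-modules such that F is naturally isomorphic to the direct sum F₁ ⊕ F₂. If F preserves filtered colimits, then both F₁ and F₂ preserve filtered colimits. -/
open CategoryTheory CategoryTheory.Limits

/-!
A natural retract `G` of a functor `F` (maps `i : G ⟶ F`, `r : F ⟶ G` with `i ≫ r = 𝟙`)
inherits every colimit that `F` preserves: a cocone `s` under `G ∘ K` becomes a cocone under
`F ∘ K` by precomposing with `r`, and the map `G c ⟶ s.pt` is `i` followed by the induced map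
out of the colimit `F c`. Each summand of `F₁ ⊞ F₂ ≅ F` is such a retract.
-/

namespace CategoryTheory.Retract

variable {C D J : Type*} [Category C] [Category D] [Category J] {F G : C ⥤ D} {K : J ⥤ C}

def isColimitMapCocone (h : Retract G F) {c : Cocone K} (hF : IsColimit (F.mapCocone c)) :
    IsColimit (G.mapCocone c) where
  desc s := h.i.app c.pt ≫ hF.desc ((Cocone.precompose (Functor.whiskerLeft K h.r)).obj s)
  fac s j := by
    have hfac := hF.fac ((Cocone.precompose (Functor.whiskerLeft K h.r)).obj s) j
    dsimp at hfac ⊢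
    rw [h.i.naturality_assoc, hfac, ← NatTrans.comp_app_assoc, h.retract,
      NatTrans.id_app, Category.id_comp]
  uniq s m hm := by
    let s' := (Cocone.precompose (Functor.whiskerLeft K h.r)).obj s
    have hr : h.r.app c.pt ≫ m = hF.desc s' := hF.uniq s' _ fun j => by
      dsimp [s']
      rw [h.r.naturality_assoc, ← hm j]
      rfl
    rw [← hr, ← NatTrans.comp_app_assoc, h.retract, NatTrans.id_app, Category.id_comp]

lemma preservesColimit (h : Retract G F) [PreservesColimit K F] : PreservesColimit K G :=
  ⟨fun hc => ⟨h.isColimitMapCocone (isColimitOfPreserves F hc)⟩⟩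

lemma preservesFilteredColimits (h : Retract G F) [PreservesFilteredColimits F] :
    PreservesFilteredColimits G :=
  ⟨fun _ _ _ => ⟨h.preservesColimit⟩⟩

end CategoryTheory.Retract

theorem stmt_0_general (R S : Type) [Ring R] [Ring S]
    (F F₁ F₂ : ModuleCat R ⥤ ModuleCat S)
    (e : F ≅ F₁ ⊞ F₂) [PreservesFilteredColimits F] :
    PreservesFilteredColimits F₁ ∧ PreservesFilteredColimits F₂ :=
  let b := BinaryBiproduct.bicone F₁ F₂
  ⟨(b.retract_left.trans (Retract.ofIso e.symm)).preservesFilteredColimits,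
    (b.retract_right.trans (Retract.ofIso e.symm)).preservesFilteredColimits⟩

/-- If an additive functor `F` between module categories is naturally isomorphic to the
direct sum (biproduct) of `F₁` and `F₂`, and `F` preserves filtered colimits, then
both `F₁` and `F₂` preserve filtered colimits. -/
theorem stmt_0 (R S : Type) [Ring R] [Ring S]
    (F F₁ F₂ : ModuleCat R ⥤ ModuleCat S) [F.Additive] [F₁.Additive] [F₂.Additive]
    (e : F ≅ F₁ ⊞ F₂) [PreservesFilteredColimits F] :
    PreservesFilteredColimits F₁ ∧ PreservesFilteredColimits F₂ :=
  stmt_0_general R S F F₁ F₂ e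
end

section
/- Let 0 → F₁ → F → F₂ → 0 be a short exact sequence of additive functors from R-modules to S-modules (exact when evaluated at every module). If F₁ and F₂ preserve filtered colimits, then F preserves filtered colimits. -/
/-!
Filtered colimits of modules are exact (AB5). So for a diagram `K`, the comparison maps
`colim (K ⋙ Fᵢ) ⟶ Fᵢ (colim K)` form a morphism from the short exact sequence
`0 → colim (K ⋙ F₁) → colim (K ⋙ F) → colim (K ⋙ F₂) → 0` to the short exact sequence
`0 → F₁ (colim K) → F (colim K) → F₂ (colim K) → 0`. Its outer components are isomorphisms by
hypothesis, hence so is the middle one by the five lemma.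
-/

open CategoryTheory CategoryTheory.Limits

universe u v w w'

-- Mathlib provides this only when the modules live in the universe of `R`.
instance ModuleCat.ab5 (R : Type u) [Ring R] : AB5 (ModuleCat.{v} R) where
  ofShape J _ _ :=
    HasExactColimitsOfShape.domain_of_functor J (forget₂ (ModuleCat.{v} R) AddCommGrpCat.{v})

lemma CategoryTheory.jointlyReflectIsomorphisms_evaluation (C D : Type*) [Category C]
    [Category D] : JointlyReflectIsomorphisms fun X : C => (evaluation C D).obj X where
  isIso f hf := (NatTrans.isIso_iff_isIso_app f).2 hf

lemma CategoryTheory.ShortComplex.shortExact_of_forall_evaluation {C D : Type*} [Category C]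
    [Category D] [Abelian D] (S : ShortComplex (C ⥤ D))
    (h : ∀ X, (S.map ((evaluation C D).obj X)).ShortExact) : S.ShortExact :=
  ((jointlyReflectIsomorphisms_evaluation C D).shortExact_iff S).2 h

noncomputable def CategoryTheory.Limits.colimit.postNatTrans {C D J : Type*} [Category C]
    [Category D] [Category J] [HasColimitsOfShape J D] (K : J ⥤ C) [HasColimit K] :
    (Functor.whiskeringLeft J C D).obj K ⋙ colim ⟶ (evaluation C D).obj (colimit K) where
  app G := colimit.post K G
  naturality G G' f := by
    dsimp
    ext j
    simp

namespace CategoryTheory.ShortComplex.ShortExact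

variable {C D : Type*} [Category C] [Category D] [Abelian D] {S : ShortComplex (C ⥤ D)}

lemma preservesColimit_X₂ (hS : S.ShortExact) {J : Type*} [Category J] [HasColimitsOfShape J D]
    [HasExactColimitsOfShape J D] (K : J ⥤ C) [PreservesColimit K S.X₁]
    [PreservesColimit K S.X₃] : PreservesColimit K S.X₂ := by
  refine ⟨fun {c} hc => ?_⟩
  have : HasColimit K := ⟨⟨⟨c, hc⟩⟩⟩
  have : IsIso (S.mapNatTrans (colimit.postNatTrans K)).τ₂ :=
    isIso₂_of_shortExact_of_isIso₁₃' _ (hS.map_of_exact _) (hS.map_of_exact _)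
      (inferInstanceAs (IsIso (colimit.post K S.X₁)))
      (inferInstanceAs (IsIso (colimit.post K S.X₃)))
  have : IsIso (colimit.post K S.X₂) := this
  exact (preservesColimit_of_isIso_post S.X₂ K).preserves hc

lemma preservesFilteredColimitsOfSize_X₂ (hS : S.ShortExact)
    [HasFilteredColimitsOfSize.{w, w'} D] [AB5OfSize.{w, w'} D]
    [PreservesFilteredColimitsOfSize.{w, w'} S.X₁] [PreservesFilteredColimitsOfSize.{w, w'} S.X₃] :
    PreservesFilteredColimitsOfSize.{w, w'} S.X₂ :=
  ⟨fun _ _ _ => ⟨fun {K} => hS.preservesColimit_X₂ K⟩⟩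

end CategoryTheory.ShortComplex.ShortExact

theorem stmt_1_general (R S : Type) [Ring R] [Ring S]
    (F F₁ F₂ : ModuleCat R ⥤ ModuleCat S)
    (α : F₁ ⟶ F) (β : F ⟶ F₂)
    (hmono : ∀ M : ModuleCat R, Function.Injective (α.app M))
    (hepi : ∀ M : ModuleCat R, Function.Surjective (β.app M))
    (hexact : ∀ M : ModuleCat R, Function.Exact (α.app M) (β.app M))
    [PreservesFilteredColimits F₁] [PreservesFilteredColimits F₂] :
    PreservesFilteredColimits F := by
  let T : ShortComplex (ModuleCat R ⥤ ModuleCat S) :=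
    ShortComplex.mk α β (by ext M x; exact (hexact M).apply_apply_eq_zero x)
  have hT : T.ShortExact := T.shortExact_of_forall_evaluation fun M =>
    ModuleCat.shortComplex_shortExact _ (hexact M) (hmono M) (hepi M)
  exact hT.preservesFilteredColimitsOfSize_X₂

/-- If `0 → F₁ → F → F₂ → 0` is a short exact sequence of additive functors between
module categories (exact at every module), and `F₁`, `F₂` preserve filtered colimits,
then so does `F`. -/
theorem stmt_1 (R S : Type) [Ring R] [Ring S]
    (F F₁ F₂ : ModuleCat R ⥤ ModuleCat S) [F.Additive] [F₁.Additive] [F₂.Additive]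
    (α : F₁ ⟶ F) (β : F ⟶ F₂)
    (hmono : ∀ M : ModuleCat R, Function.Injective (α.app M))
    (hepi : ∀ M : ModuleCat R, Function.Surjective (β.app M))
    (hexact : ∀ M : ModuleCat R, Function.Exact (α.app M) (β.app M))
    [PreservesFilteredColimits F₁] [PreservesFilteredColimits F₂] :
    PreservesFilteredColimits F :=
  stmt_1_general R S F F₁ F₂ α β hmono hepi hexact
end

section
/- Let G be a group and n a natural number. If the functor H^n(G, −) = Ext^n_{𝔽_pG}(𝔽_p, −) commutes with filtered colimits, then H^n(G, 𝔽_p) is finite-dimensional as an 𝔽_p-vector space. -/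
open CategoryTheory CategoryTheory.Limits Opposite

/-- The augmentation ring homomorphism. -/
noncomputable def augmentation (R : Type) [Ring R] (G : Type) [Group G] :
    MonoidAlgebra R G →+* R :=
  MonoidAlgebra.liftNCRingHom (RingHom.id R) (1 : G →* R) (fun _ _ => by simp)

/-- `𝔽_p` as an `𝔽_pG`-module with the trivial `G`-action. -/
noncomputable def trivialModule (p : ℕ) [Fact p.Prime] (G : Type) [Group G] :
    ModuleCat (MonoidAlgebra (ZMod p) G) :=
  (ModuleCat.restrictScalars (augmentation (ZMod p) G)).obj (ModuleCat.of (ZMod p) (ZMod p))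

/-- `H^n(G,-) = Ext^n_{𝔽_pG}(𝔽_p, -)`, as a functor with values in `𝔽_p`-vector spaces. -/
noncomputable def cohomologyFunctorFp (p : ℕ) [Fact p.Prime] (G : Type) [Group G] (n : ℕ) :
    ModuleCat (MonoidAlgebra (ZMod p) G) ⥤ ModuleCat (ZMod p) :=
  (Ext (ZMod p) (ModuleCat (MonoidAlgebra (ZMod p) G)) n).obj (op (trivialModule p G))

/-! If `H^n(G, 𝔽_p)` were infinite, pick pairwise distinct classes `c k`, `k : ℕ`. Computed on a
projective resolution, `Ext^n(X, -)` maps onto products, so some `x ∈ H^n(G, 𝔽_p^ℕ)` has `k`-th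
coordinate projection `c k`. The trivial module `𝔽_p^ℕ` is the filtered colimit of its
finite-dimensional subspaces, hence `x` comes from `H^n(G, N)` for one such `N`; as there are only
finitely many maps `N → 𝔽_p`, two coordinate projections agree on `N`, and two of the `c k`
coincide. -/

universe u v w

namespace HomologicalComplex

variable {V : Type*} [Category* V] [Abelian V] {ι : Type*} {c : ComplexShape ι}

lemma homologyUnop_inv_naturality {K L : HomologicalComplex Vᵒᵖ c} (φ : K ⟶ L) (i : ι) :
    (homologyMap φ i).unop ≫ (K.homologyUnop i).inv =
      (L.homologyUnop i).inv ≫ homologyMap ((unopFunctor V c).map φ.op) i := by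
  have h : (L.homologyUnop i).hom ≫ (homologyMap φ i).unop =
      homologyMap ((unopFunctor V c).map φ.op) i ≫ (K.homologyUnop i).hom :=
    congrArg Quiver.Hom.unop (homologyOp_hom_naturality ((unopFunctor V c).map φ.op) i)
  exact (Iso.comp_inv_eq _).2 (((Iso.eq_inv_comp _).2 h).trans (Category.assoc _ _ _).symm)

end HomologicalComplex

section Ext

variable {R : Type w} [Ring R] {C : Type u} [Category.{v} C] [Abelian C] [Linear R C]

namespace ChainComplex

def linearYonedaObjMap {α : Type*} [AddRightCancelSemigroup α] [One α]
    (K : ChainComplex C α) {Y Y' : C} (g : Y ⟶ Y') :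
    K.linearYonedaObj R Y ⟶ K.linearYonedaObj R Y' :=
  (HomologicalComplex.unopFunctor _ _).map
    ((NatTrans.mapHomologicalComplex (NatTrans.rightOp ((linearYoneda R C).map g)) _).app K).op

@[simp]
lemma linearYonedaObjMap_f_apply {α : Type*} [AddRightCancelSemigroup α] [One α]
    (K : ChainComplex C α) {Y Y' : C} (g : Y ⟶ Y') (i : α) (h : K.X i ⟶ Y) :
    (K.linearYonedaObjMap (R := R) g).f i h = h ≫ g := rfl

open HomologicalComplex in
lemma exists_homologyMap_linearYonedaObjMap_eq (K : ChainComplex C ℕ) (n : ℕ) {ι : Type*}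
    {M : ι → C} {c : Fan M} (hc : IsLimit c) (e : ∀ i, (K.linearYonedaObj R (M i)).homology n) :
    ∃ x, ∀ i, homologyMap (K.linearYonedaObjMap (c.proj i)) n x = e i := by
  have hπ (i : ι) := (ModuleCat.epi_iff_surjective ((K.linearYonedaObj R (M i)).homologyπ n)).1
    inferInstance
  choose z hz using fun i => hπ i (e i)
  -- the cocycles `z i : K.X n ⟶ M i` assemble into one cocycle with values in the product
  obtain ⟨w, hwz⟩ : ∃ w : K.X n ⟶ c.pt,
      ∀ i, w ≫ c.proj i = (K.linearYonedaObj R (M i)).iCycles n (z i) :=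
    ⟨_, Fan.IsLimit.fac hc _⟩
  have hw : (K.linearYonedaObj R c.pt).d n (n + 1) w = 0 := by
    refine Fan.IsLimit.hom_ext hc _ _ fun i => ?_
    change (K.d (n + 1) n ≫ w) ≫ c.proj i = 0 ≫ c.proj i
    rw [Category.assoc, hwz, zero_comp]
    exact ConcreteCategory.congr_hom ((K.linearYonedaObj R (M i)).iCycles_d n (n + 1)) (z i)
  let x := (K.linearYonedaObj R c.pt).cyclesMk w (n + 1) (by simp) hw
  refine ⟨(K.linearYonedaObj R c.pt).homologyπ n x, fun i => ?_⟩
  have hx : cyclesMap (K.linearYonedaObjMap (R := R) (c.proj i)) n x = z i := by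
    apply (ModuleCat.mono_iff_injective ((K.linearYonedaObj R (M i)).iCycles n)).1 inferInstance
    have hxw : (K.linearYonedaObj R c.pt).iCycles n x = w :=
      (K.linearYonedaObj R c.pt).i_cyclesMk w (n + 1) (by simp) hw
    rw [← ConcreteCategory.comp_apply, cyclesMap_i, ConcreteCategory.comp_apply, hxw,
      linearYonedaObjMap_f_apply]
    exact hwz i
  rw [← hz i, ← hx, ← ConcreteCategory.comp_apply, ← ConcreteCategory.comp_apply,
    homologyπ_naturality]

end ChainComplex

variable [EnoughProjectives C]

namespace CategoryTheory.ProjectiveResolution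

lemma isoExt_hom_naturality {X : C} (P : ProjectiveResolution X) {Y Y' : C} (g : Y ⟶ Y')
    (n : ℕ) :
    ((Ext R C n).obj (op X)).map g ≫ (P.isoExt n Y').hom =
      (P.isoExt n Y).hom ≫ HomologicalComplex.homologyMap (P.complex.linearYonedaObjMap g) n := by
  let α := NatTrans.rightOp ((linearYoneda R C).map g)
  let K := fun Z : C => (((linearYoneda R C).obj Z).rightOp.mapHomologicalComplex _).obj P.complex
  let e : ∀ Z : C, (((linearYoneda R C).obj Z).rightOp.leftDerived n).obj X ≅ (K Z).homology n :=
    fun Z => P.isoLeftDerivedObj _ n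
  let Φ := (NatTrans.mapHomologicalComplex α (ComplexShape.down ℕ)).app P.complex
  -- unfold `Ext` and `isoExt`; the ascribed type of `e` keeps the rewrites below type-correct
  change ((NatTrans.leftDerived α n).app X).unop ≫ (e Y').inv.unop ≫ ((K Y').homologyUnop n).inv =
    ((e Y).inv.unop ≫ ((K Y).homologyUnop n).inv) ≫ _
  rw [leftDerived_app_eq α P n]
  have h : ((e Y').hom ≫ (HomologicalComplex.homologyMap Φ n) ≫ (e Y).inv).unop ≫ (e Y').inv.unop ≫
      ((K Y').homologyUnop n).inv = (e Y).inv.unop ≫ ((K Y).homologyUnop n).inv ≫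
        HomologicalComplex.homologyMap ((HomologicalComplex.unopFunctor _ _).map Φ.op) n := by
    rw [unop_comp, unop_comp, Category.assoc, Category.assoc, ← unop_comp_assoc (f := (e Y').inv),
      Iso.inv_hom_id, unop_id, Category.id_comp, HomologicalComplex.homologyUnop_inv_naturality]
    rfl
  exact h.trans (Category.assoc _ _ _).symm

end CategoryTheory.ProjectiveResolution

theorem Ext_map_proj_surjective (X : C) (n : ℕ) {ι : Type*} {M : ι → C} {c : Fan M}
    (hc : IsLimit c) :
    Function.Surjective fun (x : ((Ext R C n).obj (op X)).obj c.pt) i =>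
      ((Ext R C n).obj (op X)).map (c.proj i) x := by
  intro e
  let P := projectiveResolution X
  obtain ⟨y, hy⟩ := P.complex.exists_homologyMap_linearYonedaObjMap_eq n hc
    fun i => (P.isoExt n (M i)).hom (e i)
  refine ⟨(P.isoExt n c.pt).inv y, funext fun i => ?_⟩
  have h := ConcreteCategory.congr_hom (P.isoExt_hom_naturality (c.proj i) n)
    ((P.isoExt n c.pt).inv y)
  rw [ConcreteCategory.comp_apply, ConcreteCategory.comp_apply, Iso.inv_hom_id_apply, hy] at h
  exact (P.isoExt n (M i)).toLinearEquiv.injective h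

end Ext

namespace ModuleCat

variable {R : Type u} {S : Type v} [Ring R] [Ring S]

instance {M : Type*} [AddCommGroup M] [Module R M] : Nonempty {N : Submodule R M // N.FG} :=
  ⟨⟨⊥, Submodule.fg_bot⟩⟩

theorem exists_map_subtype_eq_of_preservesFilteredColimits
    (H : ModuleCat.{v} R ⥤ ModuleCat.{v} S) [PreservesFilteredColimits H]
    (M : ModuleCat.{v} R) (x : H.obj M) :
    ∃ N : Submodule R M, N.FG ∧
      ∃ y : H.obj (of R N), H.map (ofHom N.subtype) y = x := by
  classical
  let e := (Module.fgSystem.equiv R M).toModuleIso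
  have hc := isColimitOfPreserves (H ⋙ forget _) (directLimitIsColimit _ (Module.fgSystem R M))
  obtain ⟨N, (y : H.obj (of R N.1)), hy⟩ := Types.jointly_surjective _ hc ((H.mapIso e).inv x)
  refine ⟨N, N.2, y, ?_⟩
  have hN : ofHom (Module.DirectLimit.of R _ _ (Module.fgSystem R M) N) ≫ e.hom =
      ofHom N.1.subtype :=
    congrArg ofHom (Module.fgSystem.equiv_comp_of N)
  rw [← hN, Functor.map_comp, ConcreteCategory.comp_apply]
  exact (congrArg (H.map e.hom) hy).trans ((H.mapIso e).inv_hom_id_apply x)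

instance {M Y : ModuleCat.{v} R} [Finite M] [Finite Y] : Finite (M ⟶ Y) :=
  Finite.of_injective (fun f : M ⟶ Y => (f : M → Y)) fun _ _ h =>
    hom_ext (LinearMap.coe_injective h)

theorem finite_range_map_apply_of_preservesFilteredColimits [Finite R]
    (H : ModuleCat.{v} R ⥤ ModuleCat.{v} S) [PreservesFilteredColimits H] {M : ModuleCat.{v} R}
    (Y : ModuleCat.{v} R) [Finite Y] (x : H.obj M) :
    (Set.range fun f : M ⟶ Y => H.map f x).Finite := by
  obtain ⟨N, hN, y, rfl⟩ := exists_map_subtype_eq_of_preservesFilteredColimits H M x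
  have : Module.Finite R N := Module.Finite.iff_fg.2 hN
  have : Finite (of R N) := Module.finite_of_finite R
  refine (Set.finite_range fun g : of R N ⟶ Y => H.map g y).subset ?_
  rintro _ ⟨f, rfl⟩
  exact ⟨ofHom N.subtype ≫ f, by simp⟩

end ModuleCat

/-- If `H^n(G,-)` over `𝔽_p` commutes with filtered colimits, then `H^n(G, 𝔽_p)` is a
finite-dimensional `𝔽_p`-vector space. -/
theorem stmt_5 (p : ℕ) [Fact p.Prime] (G : Type) [Group G] (n : ℕ)
    [PreservesFilteredColimits (cohomologyFunctorFp p G n)] :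
    FiniteDimensional (ZMod p) ((cohomologyFunctorFp p G n).obj (trivialModule p G)) := by
  let res := ModuleCat.restrictScalars (augmentation (ZMod p) G)
  let F := cohomologyFunctorFp p G n
  let 𝔽 := ModuleCat.of (ZMod p) (ZMod p)
  have hprod := isLimitFanMkObjOfIsLimit res _ _ (ModuleCat.productConeIsLimit fun _ : ℕ => 𝔽)
  suffices Finite (F.obj (trivialModule p G)) from Module.Finite.of_finite
  by_contra hinf
  rw [not_finite_iff_infinite] at hinf
  let c := Infinite.natEmbedding (F.obj (trivialModule p G))
  obtain ⟨x, hx⟩ := Ext_map_proj_surjective _ n hprod fun k => c k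
  refine Set.infinite_range_of_injective c.injective
    ((ModuleCat.finite_range_map_apply_of_preservesFilteredColimits (res ⋙ F) 𝔽 x).subset ?_)
  rintro _ ⟨k, rfl⟩
  exact ⟨_, congrFun hx k⟩
end

section
/- Let G be an abelian-by-finite group of finite Hirsch length; suppose A ◁ G is a normal torsion-free abelian subgroup of finite rank with G/A finite. Then G has only finitely many conjugacy classes of finite subgroups. -/
theorem aux_coset_reps (A : Type) [AddCommGroup A] [NoZeroSMulDivisors ℤ A]
    (hrank : Module.rank ℤ A < Cardinal.aleph0) (n : ℕ) (hn : 0 < n) :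
    ∃ T : Finset A, ∀ a : A, ∃ t ∈ T, ∃ b : A, a = t + (n : ℤ) • b := by
  classical
  obtain ⟨r, hr⟩ := Cardinal.lt_aleph0.mp hrank
  set P : Submodule ℤ A := LinearMap.range ((n : ℤ) • (LinearMap.id : A →ₗ[ℤ] A)) with hP
  have hPmem : ∀ x : A, x ∈ P ↔ ∃ b : A, (n : ℤ) • b = x := by
    intro x
    constructor
    · rintro ⟨b, hb⟩; exact ⟨b, hb⟩
    · rintro ⟨b, hb⟩; exact ⟨b, hb⟩
  haveI : NeZero n := ⟨hn.ne'⟩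
  have key : ∀ s : Finset (A ⧸ P), s.card ≤ n ^ r := by
    intro s
    set F : Submodule ℤ A := Submodule.span ℤ ((s.image Quotient.out : Finset A) : Set A) with hF
    haveI : Module.Finite ℤ F := Module.Finite.span_of_finite ℤ (Finset.finite_toSet _)
    haveI : Module.Free ℤ F := Module.free_of_finite_type_torsion_free'
    set bas := Module.Free.chooseBasis ℤ F with hbas
    set d := Fintype.card (Module.Free.ChooseBasisIndex ℤ F) with hd
    have hdr : d ≤ r := by
      have h1 : Module.rank ℤ F = (d : Cardinal) := by
        rw [Module.Free.rank_eq_card_chooseBasisIndex, Cardinal.mk_fintype]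
      have h2 := Submodule.rank_le F
      rw [h1, hr] at h2
      exact_mod_cast h2
    set ψ : (Module.Free.ChooseBasisIndex ℤ F → ZMod n) → A ⧸ P :=
      fun g => Submodule.Quotient.mk (∑ i, ((g i).val : ℤ) • (bas i : A)) with hψ
    have hsub : s ⊆ Finset.image ψ Finset.univ := by
      intro q hq
      have hqF : (q.out : A) ∈ F := by
        exact Submodule.subset_span
          (Finset.mem_coe.mpr (Finset.mem_image_of_mem Quotient.out hq))
      set x : F := ⟨q.out, hqF⟩ with hx
      set g : Module.Free.ChooseBasisIndex ℤ F → ZMod n :=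
        fun i => ((bas.repr x i : ℤ) : ZMod n) with hg
      refine Finset.mem_image.mpr ⟨g, Finset.mem_univ _, ?_⟩
      have hout : q.out = ∑ i, (bas.repr x i) • (bas i : A) := by
        have := bas.sum_repr x
        have h2 := congrArg (F.subtype) this
        rw [map_sum] at h2
        simp only [Submodule.coe_subtype, map_smul] at h2
        exact h2.symm
      have hdvd : ∀ i, ∃ e : ℤ, bas.repr x i - ((g i).val : ℤ) = n * e := by
        intro i
        have : (((bas.repr x i - ((g i).val : ℤ)) : ℤ) : ZMod n) = 0 := by
          push_cast
          rw [ZMod.natCast_val, ZMod.cast_id]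
          simp [hg]
        exact (ZMod.intCast_zmod_eq_zero_iff_dvd _ _).mp this
      choose e he using hdvd
      have : ψ g = Submodule.Quotient.mk q.out := by
        apply (Submodule.Quotient.eq P).mpr
        have : (∑ i, ((g i).val : ℤ) • (bas i : A)) - q.out
            = (n : ℤ) • (∑ i, (-(e i)) • (bas i : A)) := by
          rw [hout, ← Finset.sum_sub_distrib, Finset.smul_sum]
          apply Finset.sum_congr rfl
          intro i _
          rw [← sub_smul, smul_smul]
          congr 1
          linarith [he i]
        rw [this]
        exact (hPmem _).mpr ⟨_, rfl⟩
      exact this.trans (Quotient.out_eq q)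
    calc s.card ≤ (Finset.image ψ Finset.univ).card := Finset.card_le_card hsub
      _ ≤ (Finset.univ : Finset (Module.Free.ChooseBasisIndex ℤ F → ZMod n)).card :=
          Finset.card_image_le
      _ = Fintype.card (Module.Free.ChooseBasisIndex ℤ F → ZMod n) := Finset.card_univ
      _ = n ^ d := by rw [Fintype.card_fun, ZMod.card]
      _ ≤ n ^ r := Nat.pow_le_pow_right hn hdr
  have hfin : Finite (A ⧸ P) := by
    by_contra hinf
    rw [not_finite_iff_infinite] at hinf
    obtain e := Infinite.natEmbedding (A ⧸ P)
    have hcard : ((Finset.range (n ^ r + 1)).image (fun i => e i)).card = n ^ r + 1 := by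
      rw [Finset.card_image_of_injective _ e.injective, Finset.card_range]
    have := key ((Finset.range (n ^ r + 1)).image (fun i => e i))
    omega
  haveI := Fintype.ofFinite (A ⧸ P)
  refine ⟨Finset.image (Quotient.out : A ⧸ P → A) Finset.univ, fun a => ?_⟩
  refine ⟨(Submodule.Quotient.mk a : A ⧸ P).out,
    Finset.mem_image_of_mem _ (Finset.mem_univ _), ?_⟩
  have h1 : (Submodule.Quotient.mk ((Submodule.Quotient.mk a : A ⧸ P).out) : A ⧸ P)
      = Submodule.Quotient.mk a := Quotient.out_eq _
  have h2 := (Submodule.Quotient.eq P).mp h1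
  obtain ⟨b, hb⟩ := (hPmem _).mp h2
  refine ⟨-b, ?_⟩
  rw [smul_neg, hb]
  abel

theorem aux_conj (A : Type) [AddCommGroup A] [NoZeroSMulDivisors ℤ A]
    (G : Type) [Group G] (φ : Multiplicative A →* G) (hinj : Function.Injective φ)
    (hnorm : φ.range.Normal) (n : ℕ) (hn : 0 < n)
    (H H' : Subgroup G) (hHf : Finite H) (hH'f : Finite H')
    (hdvd : Nat.card H ∣ n)
    (h1 : ∀ h ∈ H, ∃ y ∈ H', h⁻¹ * y ∈ (φ.comp (powMonoidHom n)).range)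
    (h2 : ∀ y ∈ H', ∃ h ∈ H, y⁻¹ * h ∈ (φ.comp (powMonoidHom n)).range) :
    ∃ g : G, Subgroup.map (MulAut.conj g).toMonoidHom H = H' := by
  classical
  set N := (φ.comp (powMonoidHom n)).range with hN
  have hNmem : ∀ x : G, x ∈ N ↔ ∃ a : A, φ (Multiplicative.ofAdd (n • a)) = x := by
    intro x
    constructor
    · rintro ⟨y, hy⟩
      refine ⟨Multiplicative.toAdd y, ?_⟩
      have : Multiplicative.ofAdd (n • Multiplicative.toAdd y) = y ^ n := by
        rw [ofAdd_nsmul]; simp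
      rw [this]; exact hy
    · rintro ⟨a, ha⟩
      exact ⟨Multiplicative.ofAdd a, by rw [← ha]; simp [ofAdd_nsmul]⟩
  have hNR : ∀ x ∈ N, x ∈ φ.range := by
    rintro x ⟨y, hy⟩; exact ⟨y ^ n, hy⟩
  have injA : ∀ a b : A, φ (Multiplicative.ofAdd a) = φ (Multiplicative.ofAdd b) → a = b := by
    intro a b h
    exact Multiplicative.ofAdd.injective (hinj h)
  -- elements of finite subgroups meeting φ.range are trivial
  have htriv : ∀ (K : Subgroup G), Finite K → ∀ x ∈ K, x ∈ φ.range → x = 1 := by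
    intro K hK x hx hxr
    haveI := hK
    have hfo : IsOfFinOrder (⟨x, hx⟩ : K) := isOfFinOrder_of_finite _
    obtain ⟨j, hj, hjx⟩ := hfo.exists_pow_eq_one
    have hxj : x ^ j = 1 := by
      have := congrArg (Subgroup.subtype K) hjx
      simpa using this
    obtain ⟨y, hy⟩ := hxr
    have : φ (y ^ j) = φ 1 := by rw [map_pow, hy, hxj, map_one]
    have hyj : y ^ j = 1 := hinj this
    have : j • Multiplicative.toAdd y = 0 := by
      rw [← toAdd_pow, hyj]; simp
    have : (j : ℤ) • Multiplicative.toAdd y = 0 := by rw [natCast_zsmul]; exact this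
    have hy0 : Multiplicative.toAdd y = 0 := by
      rcases smul_eq_zero.mp this with h | h
      · exact absurd (by exact_mod_cast h) hj.ne'
      · exact h
    have : y = 1 := by
      have := congrArg Multiplicative.ofAdd hy0
      simpa using this
    rw [← hy, this, map_one]
  have uniq : ∀ y z : G, y ∈ H' → z ∈ H' → y⁻¹ * z ∈ φ.range → y = z := by
    intro y z hy hz hr
    have := htriv H' hH'f _ (mul_mem (inv_mem hy) hz) hr
    rwa [inv_mul_eq_one] at this
  -- conjugation action on A
  have hc : ∀ (g : G) (a : A), ∃ b : A,
      φ (Multiplicative.ofAdd b) = g * φ (Multiplicative.ofAdd a) * g⁻¹ := by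
    intro g a
    obtain ⟨y, hy⟩ := hnorm.conj_mem _ ⟨Multiplicative.ofAdd a, rfl⟩ g
    exact ⟨Multiplicative.toAdd y, by simpa using hy⟩
  choose cf hcf using hc
  have hadd : ∀ g a b, cf g (a + b) = cf g a + cf g b := by
    intro g a b
    apply injA
    rw [ofAdd_add, map_mul, hcf, hcf, hcf, ofAdd_add, map_mul]
    group
  set c : G → A →+ A := fun g => AddMonoidHom.mk' (cf g) (hadd g) with hcdef
  have hcap : ∀ (g : G) (a : A), φ (Multiplicative.ofAdd (c g a))
      = g * φ (Multiplicative.ofAdd a) * g⁻¹ := fun g a => hcf g a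
  have divide : ∀ a b : A, n • a = n • b → a = b := by
    intro a b h
    have hne : (n : ℤ) ≠ 0 := by exact_mod_cast hn.ne'
    apply smul_right_injective A hne
    show (n : ℤ) • a = (n : ℤ) • b
    rw [natCast_zsmul, natCast_zsmul]; exact h
  haveI := hHf
  haveI := Fintype.ofFinite H
  set m := Nat.card H with hm
  have hmpos : 0 < m := Nat.card_pos
  obtain ⟨k, hk⟩ := hdvd
  -- the correspondence θ : H → H'
  have hθ : ∀ h : H, ∃ y : G, y ∈ H' ∧ (h : G)⁻¹ * y ∈ N := by
    intro h
    obtain ⟨y, hy1, hy2⟩ := h1 h h.2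
    exact ⟨y, hy1, hy2⟩
  choose θ θH' θN using hθ
  have θ_mul : ∀ a b : H, θ (a * b) = θ a * θ b := by
    intro a b
    apply uniq _ _ (θH' _) (mul_mem (θH' a) (θH' b))
    have hab : ((a * b : H) : G) = (a : G) * (b : G) := rfl
    have heq : (θ (a * b))⁻¹ * (θ a * θ b)
        = (((a * b : H) : G)⁻¹ * θ (a * b))⁻¹ *
          ((↑b : G)⁻¹ * (((↑a : G)⁻¹ * θ a) * ↑b) * ((↑b : G)⁻¹ * θ b)) := by
      rw [hab]; group
    rw [heq]
    have m1 : (((a * b : H) : G)⁻¹ * θ (a * b))⁻¹ ∈ φ.range :=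
      inv_mem (hNR _ (θN (a * b)))
    have m2 : (↑b : G)⁻¹ * (((↑a : G)⁻¹ * θ a) * ↑b) ∈ φ.range := by
      have := hnorm.conj_mem _ (hNR _ (θN a)) ((↑b : G)⁻¹)
      simpa [mul_assoc] using this
    have m3 : (↑b : G)⁻¹ * θ b ∈ φ.range := hNR _ (θN b)
    exact mul_mem m1 (mul_mem m2 m3)
  -- the cocycle β
  have hβ : ∀ h : H, ∃ b : A, φ (Multiplicative.ofAdd (n • b)) = (↑h : G)⁻¹ * θ h :=
    fun h => (hNmem _).mp (θN h)
  choose β hβ using hβ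
  have θ_eq : ∀ h : H, θ h = ↑h * φ (Multiplicative.ofAdd (n • β h)) := by
    intro h
    rw [hβ h]
    group
  have βc : ∀ a b : H, β (a * b) = c ((↑b : G))⁻¹ (β a) + β b := by
    intro a b
    apply divide
    apply injA
    have lhs : φ (Multiplicative.ofAdd (n • β (a * b))) = ((a : G) * (b : G))⁻¹ * (θ a * θ b) := by
      rw [hβ (a * b), θ_mul a b]
      norm_cast
    have rhs : φ (Multiplicative.ofAdd (n • (c ((↑b : G))⁻¹ (β a) + β b)))
        = ((a : G) * (b : G))⁻¹ * (θ a * θ b) := by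
      rw [smul_add, ofAdd_add, map_mul, ← AddMonoidHom.map_nsmul, hcap, inv_inv]
      rw [θ_eq a, θ_eq b]
      group
    rw [lhs, rhs]
  set σ : A := ∑ x : H, β x with hσ
  have sumid : ∀ h : H, m • β h = σ - c ((↑h : G))⁻¹ σ := by
    intro h
    have e1 : ∑ x : H, β (x * h) = σ := Equiv.sum_comp (Equiv.mulRight h) β
    have e2 : ∑ x : H, β (x * h) = c ((↑h : G))⁻¹ σ + m • β h := by
      calc ∑ x : H, β (x * h) = ∑ x : H, (c ((↑h : G))⁻¹ (β x) + β h) := by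
            apply Finset.sum_congr rfl
            intro x _
            exact βc x h
        _ = (∑ x : H, c ((↑h : G))⁻¹ (β x)) + ∑ _x : H, β h := Finset.sum_add_distrib
        _ = c ((↑h : G))⁻¹ σ + m • β h := by
            rw [← map_sum, Finset.sum_const, Finset.card_univ, hσ]
            congr 1
            rw [hm, Nat.card_eq_fintype_card]
    rw [e1] at e2
    exact ((sub_eq_iff_eq_add').mpr e2).symm
  set τ : A := k • σ with hτ
  set u : G := φ (Multiplicative.ofAdd τ) with hu
  have comm : ∀ x y : G, x ∈ φ.range → y ∈ φ.range → x * y = y * x := by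
    rintro x y ⟨a, rfl⟩ ⟨b, rfl⟩
    rw [← map_mul, ← map_mul, mul_comm]
  have key : ∀ h : H, θ h = u⁻¹ * ↑h * u := by
    intro h
    have e1 : n • β h = τ - c ((↑h : G))⁻¹ τ := by
      have : n • β h = k • (m • β h) := by
        rw [smul_smul, hk, mul_comm]
      rw [this, sumid h, smul_sub, ← AddMonoidHom.map_nsmul, hτ]
    have e2 : θ h = ↑h * (u * (φ (Multiplicative.ofAdd (c ((↑h : G))⁻¹ τ)))⁻¹) := by
      rw [θ_eq h, e1, sub_eq_add_neg, ofAdd_add, map_mul, ofAdd_neg, map_inv, hu]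
    have e3 : φ (Multiplicative.ofAdd (c ((↑h : G))⁻¹ τ)) = (↑h : G)⁻¹ * u * ↑h := by
      rw [hcap, inv_inv, hu]
    rw [e3] at e2
    set w : G := ↑h * u * (↑h : G)⁻¹ with hw
    have hwr : w ∈ φ.range := hnorm.conj_mem _ ⟨Multiplicative.ofAdd τ, rfl⟩ _
    have hur : u ∈ φ.range := ⟨Multiplicative.ofAdd τ, rfl⟩
    have hcw : w * u = u * w := comm _ _ hwr hur
    have hwu : w * u⁻¹ = u⁻¹ * w := by
      calc w * u⁻¹ = u⁻¹ * (u * w) * u⁻¹ := by group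
        _ = u⁻¹ * (w * u) * u⁻¹ := by rw [hcw]
        _ = u⁻¹ * w := by group
    calc θ h = w * u⁻¹ * ↑h := by rw [e2, hw]; group
      _ = u⁻¹ * w * ↑h := by rw [hwu]
      _ = u⁻¹ * ↑h * u := by rw [hw]; group
  have conj_eq : ∀ h : G, (MulAut.conj u⁻¹).toMonoidHom h = u⁻¹ * h * u := by
    intro h
    simp [MulAut.conj_apply]
  refine ⟨u⁻¹, le_antisymm ?_ ?_⟩
  · rintro x ⟨h, hh, rfl⟩
    rw [conj_eq]
    have := θH' ⟨h, hh⟩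
    rwa [key ⟨h, hh⟩] at this
  · intro x hx
    obtain ⟨h, hh, hN2⟩ := h2 x hx
    have hx_eq : θ ⟨h, hh⟩ = x := by
      apply uniq _ _ (θH' _) hx
      have heq : (θ ⟨h, hh⟩)⁻¹ * x
          = (((⟨h, hh⟩ : H) : G)⁻¹ * θ ⟨h, hh⟩)⁻¹ * ((((⟨h, hh⟩ : H) : G))⁻¹ * x) := by
        group
      have hN3 : (((⟨h, hh⟩ : H) : G))⁻¹ * x ∈ N := by
        have : (((⟨h, hh⟩ : H) : G))⁻¹ * x = (x⁻¹ * h)⁻¹ := by group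
        rw [this]
        exact inv_mem hN2
      rw [heq]
      exact mul_mem (inv_mem (hNR _ (θN ⟨h, hh⟩))) (hNR _ hN3)
    refine Subgroup.mem_map.mpr ⟨h, hh, ?_⟩
    rw [conj_eq]
    exact (key ⟨h, hh⟩).symm.trans hx_eq

theorem aux_triv (A : Type) [AddCommGroup A] [NoZeroSMulDivisors ℤ A]
    (G : Type) [Group G] (φ : Multiplicative A →* G) (hinj : Function.Injective φ)
    (K : Subgroup G) (hK : Finite K) : ∀ x ∈ K, x ∈ φ.range → x = 1 := by
  intro x hx hxr
  haveI := hK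
  have hfo : IsOfFinOrder (⟨x, hx⟩ : K) := isOfFinOrder_of_finite _
  obtain ⟨j, hj, hjx⟩ := hfo.exists_pow_eq_one
  have hxj : x ^ j = 1 := by
    have := congrArg (Subgroup.subtype K) hjx
    simpa using this
  obtain ⟨y, hy⟩ := hxr
  have : φ (y ^ j) = φ 1 := by rw [map_pow, hy, hxj, map_one]
  have hyj : y ^ j = 1 := hinj this
  have h0 : j • Multiplicative.toAdd y = 0 := by
    rw [← toAdd_pow, hyj]; simp
  have h1 : (j : ℤ) • Multiplicative.toAdd y = 0 := by rw [natCast_zsmul]; exact h0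
  have hy0 : Multiplicative.toAdd y = 0 := by
    rcases smul_eq_zero.mp h1 with h | h
    · exact absurd (by exact_mod_cast h) hj.ne'
    · exact h
  have : y = 1 := by
    have := congrArg Multiplicative.ofAdd hy0
    simpa using this
  rw [← hy, this, map_one]

/-- Let `G` be torsion-free-abelian-by-finite of finite Hirsch length: `A` is a
torsion-free abelian group of finite rank embedded as a normal subgroup of `G` with
finite quotient. Then `G` has finitely many conjugacy classes of finite subgroups. -/
theorem stmt_11 (A : Type) [AddCommGroup A] [NoZeroSMulDivisors ℤ A]
    (hrank : Module.rank ℤ A < Cardinal.aleph0)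
    (G : Type) [Group G] (φ : Multiplicative A →* G) (hinj : Function.Injective φ)
    (hnorm : φ.range.Normal) (hfin : Finite (G ⧸ φ.range)) :
    ∃ S : Finset (Subgroup G), ∀ H : Subgroup G, Finite H →
      ∃ K ∈ S, ∃ g : G, Subgroup.map (MulAut.conj g).toMonoidHom H = K := by
  classical
  haveI := hfin
  haveI := hnorm
  haveI : Fintype (G ⧸ φ.range) := Fintype.ofFinite _
  set n := Nat.card (G ⧸ φ.range) with hn
  have hnpos : 0 < n := Nat.card_pos
  set N := (φ.comp (powMonoidHom n)).range with hN
  obtain ⟨T, hT⟩ := aux_coset_reps A hrank n hnpos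
  set D : Finset G := Finset.image
    (fun p : (G ⧸ φ.range) × A => (Quotient.out p.1) * φ (Multiplicative.ofAdd p.2))
    (Finset.univ ×ˢ T) with hD
  have hcover : ∀ g : G, ∃ d ∈ D, d⁻¹ * g ∈ N := by
    intro g
    set q : G ⧸ φ.range := QuotientGroup.mk g with hq
    have hout : (QuotientGroup.mk (Quotient.out q) : G ⧸ φ.range) = QuotientGroup.mk g :=
      Quotient.out_eq q
    have hmem : (Quotient.out q)⁻¹ * g ∈ φ.range := QuotientGroup.eq.mp hout
    obtain ⟨y, hy⟩ := hmem
    obtain ⟨t, htT, b, hb⟩ := hT (Multiplicative.toAdd y)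
    refine ⟨Quotient.out q * φ (Multiplicative.ofAdd t), ?_, ?_⟩
    · have hmemD : ((q, t) : (G ⧸ φ.range) × A) ∈ (Finset.univ ×ˢ T) :=
        Finset.mem_product.mpr ⟨Finset.mem_univ _, htT⟩
      exact Finset.mem_image_of_mem
        (fun p : (G ⧸ φ.range) × A => (Quotient.out p.1) * φ (Multiplicative.ofAdd p.2))
        hmemD
    · have : (Quotient.out q * φ (Multiplicative.ofAdd t))⁻¹ * g
          = φ ((Multiplicative.ofAdd t)⁻¹ * y) := by
        rw [map_mul, map_inv]
        rw [show φ y = (Quotient.out q)⁻¹ * g from by rw [hy]]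
        group
      rw [this]
      refine ⟨Multiplicative.ofAdd b, ?_⟩
      simp only [MonoidHom.coe_comp, Function.comp_apply, powMonoidHom_apply]
      congr 1
      have : (Multiplicative.ofAdd t)⁻¹ * y
          = Multiplicative.ofAdd (Multiplicative.toAdd y - t) := by
        rw [ofAdd_sub]
        simp [div_eq_mul_inv, mul_comm]
      rw [this, hb]
      rw [← ofAdd_nsmul]
      congr 1
      rw [natCast_zsmul]
      abel
  set inv : Subgroup G → Finset G :=
    fun K => D.filter (fun d => ∃ h ∈ K, d⁻¹ * h ∈ N) with hinv
  set pick : Finset G → Subgroup G := fun E =>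
    if hE : ∃ K : Subgroup G, Finite K ∧ inv K = E then hE.choose else ⊥ with hpick
  refine ⟨Finset.image pick D.powerset, ?_⟩
  intro H hHf
  have hmemP : inv H ∈ D.powerset := Finset.mem_powerset.mpr (Finset.filter_subset _ _)
  have hex : ∃ K : Subgroup G, Finite K ∧ inv K = inv H := ⟨H, hHf, rfl⟩
  have hpickeq : pick (inv H) = hex.choose := by
    rw [hpick]
    exact dif_pos hex
  have hKf : Finite (pick (inv H)) := by rw [hpickeq]; exact hex.choose_spec.1
  have hKinv : inv (pick (inv H)) = inv H := by rw [hpickeq]; exact hex.choose_spec.2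
  refine ⟨pick (inv H), Finset.mem_image_of_mem pick hmemP, ?_⟩
  have same : ∀ (K₁ K₂ : Subgroup G), inv K₁ = inv K₂ → ∀ h ∈ K₁, ∃ y ∈ K₂, h⁻¹ * y ∈ N := by
    intro K₁ K₂ hEq h hh
    obtain ⟨d, hdD, hdN⟩ := hcover h
    have hd1 : d ∈ inv K₁ := by
      rw [hinv]
      exact Finset.mem_filter.mpr ⟨hdD, ⟨h, hh, hdN⟩⟩
    rw [hEq, hinv] at hd1
    obtain ⟨-, y, hy, hyN⟩ := Finset.mem_filter.mp hd1
    refine ⟨y, hy, ?_⟩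
    have : h⁻¹ * y = (d⁻¹ * h)⁻¹ * (d⁻¹ * y) := by group
    rw [this]
    exact mul_mem (inv_mem hdN) hyN
  have hdvd : Nat.card H ∣ n := by
    have hψinj : Function.Injective ((QuotientGroup.mk' φ.range).comp H.subtype) := by
      rw [injective_iff_map_eq_one]
      intro a ha
      have : (a : G) ∈ φ.range := by
        rw [← QuotientGroup.eq_one_iff (a : G)]
        exact ha
      have := aux_triv A G φ hinj H hHf (a : G) a.2 this
      exact Subtype.ext this
    exact Subgroup.card_dvd_of_injective _ hψinj
  exact aux_conj A G φ hinj hnorm n hnpos H (pick (inv H)) hHf hKf hdvd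
    (same H _ hKinv.symm) (same _ H hKinv)
end
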